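/- If G is a connected chordal graph, then the diameter of the subgraph induced by the center C(G) is at most 3. -/

import Mathlib

open SimpleGraph

variable {V : Type*}

noncomputable instance (priority := low) instFintypeSubsetOfFinite [Finite V] (s : Set V) :
    Fintype ↥s := Fintype.ofFinite _

/-- Eccentricity of a vertex: max distance to any vertex. -/
noncomputable def ecc [Fintype V] (G : SimpleGraph V) (x : V) : ℕ :=
  Finset.univ.sup (G.dist x)

/-- Radius: minimum eccentricity. -/
noncomputable def grad [Fintype V] (G : SimpleGraph V) : ℕ :=
  sInf (Set.range (ecc G))

/-- Diameter: maximum eccentricity. -/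
noncomputable def gdiam [Fintype V] (G : SimpleGraph V) : ℕ :=
  Finset.univ.sup (ecc G)

/-- The center: vertices of minimum eccentricity. -/
def center [Fintype V] (G : SimpleGraph V) : Set V :=
  {x | ecc G x = grad G}

/-- `G` has an induced cycle of length `n`. -/
def HasInducedCycle (G : SimpleGraph V) (n : ℕ) : Prop :=
  3 ≤ n ∧ ∃ f : ZMod n → V, Function.Injective f ∧
    ∀ i j : ZMod n, G.Adj (f i) (f j) ↔ (i = j + 1 ∨ j = i + 1)

/-- `G` is `k`-chordal: no induced cycle of length greater than `k`. -/
def KChordal (G : SimpleGraph V) (k : ℕ) : Prop :=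
  ∀ n, k < n → ¬ HasInducedCycle G n

/-
In a chordal graph every edge `uv` of a closed walk lies in a triangle `uvt` with `t` on the
walk: a shortest `v`–`u` path inside the walk that avoids the edge `uv` is chordless, so with
`uv` it closes an induced cycle, which must be a triangle. Applied to closed walks made of
geodesics, this shows that `d(·, z)` is quasiconvex along geodesics: a vertex adjacent to `x` on
a geodesic from `x` to `y` is not farther from `z` than both `x` and `y`. Hence eccentricity is
quasiconvex too and geodesics between central vertices stay in the center. If central `x`, `y`
had `d(x, y) ≥ 4`, let `x x₁ m y₁ w` start a geodesic from `x` to `y`; as `x`, `m`, `w` are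
central, a vertex `z` farthest from `m` is not farther from `x` or `w`. Two more closed walks
then produce neighbours `s` of `x` and `t` of `w` that are neighbours of `m` one step closer to
`z`; but `m` lies on an `s`–`t` geodesic, contradicting quasiconvexity.
-/

namespace SimpleGraph

variable {G : SimpleGraph V}

theorem hasInducedCycle_of_adj_iff {N : ℕ} (hN : 3 ≤ N) (g : ℕ → V)
    (hinj : Set.InjOn g (Set.Iio N))
    (hadj : ∀ i j, i < j → j < N → (G.Adj (g i) (g j) ↔ j = i + 1 ∨ (i = 0 ∧ j + 1 = N))) :
    HasInducedCycle G N := by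
  have : NeZero N := ⟨by omega⟩
  have : Fact (1 < N) := ⟨by omega⟩
  have eq_add_one_iff (a b : ZMod N) :
      a = b + 1 ↔ a.val = b.val + 1 ∨ (a.val = 0 ∧ b.val + 1 = N) := by
    rw [← (ZMod.val_injective N).eq_iff, ZMod.val_add, ZMod.val_one]
    have := a.val_lt
    rcases (show b.val + 1 < N ∨ b.val + 1 = N by have := b.val_lt; omega) with h | h
    · rw [Nat.mod_eq_of_lt h]; omega
    · rw [h, Nat.mod_self]; omega
  refine ⟨hN, fun k => g k.val, fun a b h => ZMod.val_injective N (hinj a.val_lt b.val_lt h), ?_⟩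
  intro a b
  rw [eq_add_one_iff, eq_add_one_iff]
  rcases lt_trichotomy a.val b.val with h | h | h
  · rw [hadj _ _ h b.val_lt]; omega
  · simp only [h, SimpleGraph.irrefl, false_iff]; omega
  · rw [G.adj_comm, hadj _ _ h a.val_lt]; omega

theorem Walk.exists_shorter_of_adj_getVert {u v : V} (p : G.Walk u v) {i j : ℕ}
    (hij : i + 1 < j) (hj : j ≤ p.length) (h : G.Adj (p.getVert i) (p.getVert j)) :
    ∃ q : G.Walk u v, q.length < p.length ∧ q.support ⊆ p.support ∧
      ∀ e ∈ q.edges, e ∈ p.edges ∨ e = s(p.getVert i, p.getVert j) := by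
  refine ⟨(p.take i).append (.cons h (p.drop j)), ?_, ?_, ?_⟩
  · simp only [Walk.length_append, Walk.take_length, Walk.length_cons, Walk.drop_length]
    omega
  · intro w hw
    simp only [Walk.support_append, Walk.support_cons, List.mem_append, List.tail_cons] at hw
    exact hw.elim (fun h => (p.isSubwalk_take i).support_subset h)
      (fun h => (p.isSubwalk_drop j).support_subset h)
  · intro e he
    simp only [Walk.edges_append, Walk.edges_cons, List.mem_append, List.mem_cons] at he
    rcases he with he | he | he
    · exact .inl ((p.isSubwalk_take i).edges_subset he)
    · exact .inr he
    · exact .inl ((p.isSubwalk_drop j).edges_subset he)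

theorem Walk.two_le_length_of_not_mem_edges {u v : V} (huv : G.Adj u v) (p : G.Walk v u)
    (hp : s(u, v) ∉ p.edges) : 2 ≤ p.length := by
  rcases p with _ | ⟨h, _ | ⟨h', q⟩⟩
  · exact absurd huv G.irrefl
  · simp [Sym2.eq_swap] at hp
  · simp

theorem Walk.IsPath.hasInducedCycle {u v : V} {p : G.Walk v u} (hp : p.IsPath)
    (huv : G.Adj u v) (hlen : 3 ≤ p.length)
    (hchord : ∀ i j, i < j → j ≤ p.length → G.Adj (p.getVert i) (p.getVert j) →
      j = i + 1 ∨ (i = 0 ∧ j = p.length)) :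
    HasInducedCycle G (p.length + 1) := by
  refine hasInducedCycle_of_adj_iff (by omega) p.getVert
    (fun i hi j hj => hp.getVert_injOn (by simp at hi ⊢; omega) (by simp at hj ⊢; omega))
    (fun i j hij hj => ⟨fun h => by have := hchord i j hij (by omega) h; omega, ?_⟩)
  rintro (rfl | ⟨rfl, hj⟩)
  · exact p.adj_getVert_succ (by omega)
  · rw [p.getVert_zero, show j = p.length by omega, p.getVert_length]
    exact huv.symm

theorem _root_.KChordal.exists_adj_adj_of_walk (hch : KChordal G 3) {u v : V} (huv : G.Adj u v)
    (W : G.Walk v u) (hW : s(u, v) ∉ W.edges) : ∃ t ∈ W.support, G.Adj t u ∧ G.Adj t v := by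
  classical
  let S : Set (G.Walk v u) := {p | p.IsPath ∧ s(u, v) ∉ p.edges ∧ p.support ⊆ W.support}
  have bypass_mem (p : G.Walk v u) (hpe : s(u, v) ∉ p.edges) (hps : p.support ⊆ W.support) :
      p.bypass ∈ S :=
    ⟨p.bypass_isPath, fun h => hpe (p.edges_bypass_subset_edges h),
      List.Subset.trans p.support_bypass_subset_support hps⟩
  obtain ⟨p, ⟨hp, hpe, hps⟩, hmin⟩ :=
    (measure Walk.length).wf.has_min S ⟨_, bypass_mem W hW (List.Subset.refl _)⟩
  have hu : p.getVert p.length = u := p.getVert_length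
  have hv : p.getVert 0 = v := p.getVert_zero
  -- A chord of `p` other than `s(u, v)` would shortcut `p` to a shorter walk in `S`.
  have hchord (i j : ℕ) (hij : i < j) (hj : j ≤ p.length)
      (h : G.Adj (p.getVert i) (p.getVert j)) : j = i + 1 ∨ (i = 0 ∧ j = p.length) := by
    by_contra hne
    obtain ⟨q, hql, hqs, hqe⟩ := p.exists_shorter_of_adj_getVert (by omega) hj h
    refine hmin q.bypass (bypass_mem q (fun he => ?_) (List.Subset.trans hqs hps))
      (q.length_bypass_le_length.trans_lt hql)
    rcases hqe _ he with he | he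
    · exact hpe he
    · have hinj := hp.getVert_injOn
      rcases Sym2.eq_iff.mp he with ⟨h1, -⟩ | ⟨h1, h2⟩
      · have := hinj (by simp) (by simp; omega) (hu.trans h1); omega
      · have := hinj (by simp) (by simp; omega) (hu.trans h1)
        have := hinj (by simp) (by simp; omega) (hv.trans h2)
        omega
  rcases (p.two_le_length_of_not_mem_edges huv hpe).eq_or_lt with h2 | h3
  · refine ⟨p.getVert 1, hps (p.getVert_mem_support 1), ?_, ?_⟩
    · have := p.adj_getVert_succ (i := 1) (by omega)
      rwa [show 1 + 1 = p.length by omega, hu] at this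
    · simpa [hv] using (p.adj_getVert_succ (i := 0) (by omega)).symm
  · exact absurd (hp.hasInducedCycle huv h3 hchord) (hch _ (by omega))

theorem Walk.dist_add_dist_of_mem_support {u v w : V} {p : G.Walk u v}
    (hp : p.length = G.dist u v) (hw : w ∈ p.support) :
    G.dist u w + G.dist w v = G.dist u v := by
  obtain ⟨q, r, rfl⟩ := Walk.mem_support_iff_exists_append.mp hw
  have := dist_le q
  have := dist_le r
  have := q.reachable.dist_triangle_left v
  rw [Walk.length_append] at hp
  omega

theorem dist_le_max_of_adj_of_dist_eq_succ (hG : G.Connected) (hch : KChordal G 3)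
    {x m y z : V} (hxm : G.Adj x m) (hxy : G.dist x y = G.dist m y + 1) :
    G.dist m z ≤ max (G.dist x z) (G.dist y z) := by
  by_contra! hlt
  obtain ⟨hxz, hyz⟩ := max_lt_iff.mp hlt
  obtain ⟨Pmy, hPmy⟩ := hG.exists_walk_length_eq_dist m y
  obtain ⟨Pyz, hPyz⟩ := hG.exists_walk_length_eq_dist y z
  obtain ⟨Pxz, hPxz⟩ := hG.exists_walk_length_eq_dist x z
  have hxm₁ : G.dist m x = 1 := dist_eq_one_iff_adj.mpr hxm.symm
  have hedge : s(x, m) ∉ (Pmy.append (Pyz.append Pxz.reverse)).edges := by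
    simp only [Walk.edges_append, Walk.edges_reverse, List.mem_append, List.mem_reverse, not_or]
    refine ⟨fun h => ?_, fun h => ?_, fun h => ?_⟩
    · have := Walk.dist_add_dist_of_mem_support hPmy (Pmy.fst_mem_support_of_mem_edges h)
      omega
    · have := Walk.dist_add_dist_of_mem_support hPyz (Pyz.snd_mem_support_of_mem_edges h)
      omega
    · have := Walk.dist_add_dist_of_mem_support hPxz (Pxz.snd_mem_support_of_mem_edges h)
      omega
  obtain ⟨t, ht, htx, htm⟩ := hch.exists_adj_adj_of_walk hxm _ hedge
  have hxt : G.dist x t = 1 := dist_eq_one_iff_adj.mpr htx.symm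
  have hmt : G.dist m t = 1 := dist_eq_one_iff_adj.mpr htm.symm
  have hmz : G.dist m z ≤ G.dist m t + G.dist t z := hG.dist_triangle
  simp only [Walk.mem_support_append_iff, Walk.support_reverse, List.mem_reverse] at ht
  rcases ht with ht | ht | ht
  · have := Walk.dist_add_dist_of_mem_support hPmy ht
    have : G.dist x y ≤ G.dist x t + G.dist t y := hG.dist_triangle
    omega
  · have := Walk.dist_add_dist_of_mem_support hPyz ht
    obtain rfl : y = t := hG.dist_eq_zero_iff.mp (by omega)
    omega
  · have := Walk.dist_add_dist_of_mem_support hPxz ht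
    omega

theorem Walk.dist_le_max_of_mem_support (hG : G.Connected) (hch : KChordal G 3) {x y w : V}
    (p : G.Walk x y) (hp : p.length = G.dist x y) (hw : w ∈ p.support) (z : V) :
    G.dist w z ≤ max (G.dist x z) (G.dist y z) := by
  induction p with
  | nil =>
    rw [Walk.support_nil, List.mem_singleton] at hw
    exact hw ▸ le_max_left _ _
  | @cons x x' y hxx' p ih =>
    have hp' : p.length = G.dist x' y := by
      have := dist_le p
      have : G.dist x y ≤ G.dist x x' + G.dist x' y := hG.dist_triangle
      rw [Walk.length_cons, dist_eq_one_iff_adj.mpr hxx'] at *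
      omega
    rw [Walk.support_cons, List.mem_cons] at hw
    rcases hw with rfl | hw
    · exact le_max_left _ _
    · refine (ih hp' hw).trans (max_le ?_ (le_max_right _ _))
      exact dist_le_max_of_adj_of_dist_eq_succ hG hch hxx'
        (by rw [← hp', ← hp, Walk.length_cons])

theorem Walk.eq_or_adj_of_mem_support_of_adj (hG : G.Connected) {a z m t : V} {p : G.Walk a z}
    (hp : p.length = G.dist a z) (ht : t ∈ p.support) (htm : G.Adj t m)
    (haz : G.dist a z ≤ G.dist m z) : t = a ∨ (G.Adj a t ∧ G.dist t z + 1 = G.dist m z) := by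
  have := Walk.dist_add_dist_of_mem_support hp ht
  have : G.dist m z ≤ G.dist m t + G.dist t z := hG.dist_triangle
  rw [dist_eq_one_iff_adj.mpr htm.symm] at this
  rcases (show G.dist a t = 0 ∨ G.dist a t = 1 by omega) with h | h
  · exact .inl (hG.dist_eq_zero_iff.mp h).symm
  · exact .inr ⟨dist_eq_one_iff_adj.mp h, by omega⟩

theorem exists_adj_closer_adj_of_dist_eq_two (hG : G.Connected) (hch : KChordal G 3)
    {x x₁ m y z : V} (hxx₁ : G.Adj x x₁) (hx₁m : G.Adj x₁ m) (hxm : G.dist x m = 2)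
    (hx₁y : G.dist x₁ y = G.dist m y + 1) (hmy : m ≠ y)
    (hxz : G.dist x z ≤ G.dist m z) (hyz : G.dist y z ≤ G.dist m z) :
    ∃ s, G.Adj s m ∧ G.dist s z + 1 = G.dist m z ∧ (G.Adj s x ∨ G.Adj s y) := by
  obtain ⟨Pmy, hPmy⟩ := hG.exists_walk_length_eq_dist m y
  obtain ⟨Pyz, hPyz⟩ := hG.exists_walk_length_eq_dist y z
  obtain ⟨Pxz, hPxz⟩ := hG.exists_walk_length_eq_dist x z
  have hmx₁ : G.dist m x₁ = 1 := dist_eq_one_iff_adj.mpr hx₁m.symm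
  have hym : G.dist y m ≠ 0 := by rw [Ne, hG.dist_eq_zero_iff]; exact hmy.symm
  have hedge : s(x₁, m) ∉ (Pmy.append (Pyz.append (Pxz.reverse.append hxx₁.toWalk))).edges := by
    simp only [Walk.edges_append, Walk.edges_reverse, Adj.edges_toWalk, List.mem_append,
      List.mem_reverse, List.mem_singleton, not_or]
    refine ⟨fun h => ?_, fun h => ?_, fun h => ?_, fun h => ?_⟩
    · have := Walk.dist_add_dist_of_mem_support hPmy (Pmy.fst_mem_support_of_mem_edges h)
      omega
    · have := Walk.dist_add_dist_of_mem_support hPyz (Pyz.snd_mem_support_of_mem_edges h)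
      omega
    · have := Walk.dist_add_dist_of_mem_support hPxz (Pxz.snd_mem_support_of_mem_edges h)
      omega
    · rcases Sym2.eq_iff.mp h with ⟨-, h⟩ | ⟨-, rfl⟩
      · exact hx₁m.ne h.symm
      · simp at hxm
  obtain ⟨t, ht, htx₁, htm⟩ := hch.exists_adj_adj_of_walk hx₁m _ hedge
  simp only [Walk.mem_support_append_iff, Walk.support_reverse, List.mem_reverse,
    Adj.support_toWalk, List.mem_cons, List.not_mem_nil, or_false] at ht
  rcases ht with ht | ht | ht | rfl | rfl
  · have := Walk.dist_add_dist_of_mem_support hPmy ht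
    have : G.dist x₁ y ≤ G.dist x₁ t + G.dist t y := hG.dist_triangle
    rw [dist_eq_one_iff_adj.mpr htm.symm, dist_eq_one_iff_adj.mpr htx₁.symm] at *
    omega
  · rcases Pyz.eq_or_adj_of_mem_support_of_adj hG hPyz ht htm hyz with rfl | ⟨hyt, htz⟩
    · rw [dist_eq_one_iff_adj.mpr htx₁.symm] at hx₁y
      exact absurd (hG.dist_eq_zero_iff.mp (by omega)) hmy
    · exact ⟨t, htm, htz, .inr hyt.symm⟩
  · rcases Pxz.eq_or_adj_of_mem_support_of_adj hG hPxz ht htm hxz with rfl | ⟨hxt, htz⟩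
    · simp [dist_eq_one_iff_adj.mpr htm] at hxm
    · exact ⟨t, htm, htz, .inl hxt.symm⟩
  · simp [dist_eq_one_iff_adj.mpr htm] at hxm
  · exact absurd htx₁ G.irrefl

theorem exists_adj_closer_adj_of_adj_closer (hG : G.Connected) (hch : KChordal G 3)
    {m y₁ y s z : V} (hmy₁ : G.Adj m y₁) (hy₁y : G.Adj y₁ y) (hmy : G.dist m y = 2)
    (hsm : G.Adj s m) (hsy : 3 ≤ G.dist s y) (hsz : G.dist s z + 1 = G.dist m z)
    (hyz : G.dist y z ≤ G.dist m z) :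
    ∃ t, G.Adj t m ∧ G.dist t z + 1 = G.dist m z ∧ G.Adj t y := by
  obtain ⟨Psz, hPsz⟩ := hG.exists_walk_length_eq_dist s z
  obtain ⟨Pyz, hPyz⟩ := hG.exists_walk_length_eq_dist y z
  have hym : G.dist y m = 2 := dist_comm.trans hmy
  have hsy₁ : ¬ G.Adj s y₁ := fun h => by
    have : G.dist s y ≤ G.dist s y₁ + G.dist y₁ y := hG.dist_triangle
    rw [dist_eq_one_iff_adj.mpr h, dist_eq_one_iff_adj.mpr hy₁y] at this
    omega
  have hedge : s(y₁, m) ∉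
      (hsm.symm.toWalk.append (Psz.append (Pyz.reverse.append hy₁y.symm.toWalk))).edges := by
    simp only [Walk.edges_append, Walk.edges_reverse, Adj.edges_toWalk, List.mem_append,
      List.mem_reverse, List.mem_singleton, not_or]
    refine ⟨fun h => ?_, fun h => ?_, fun h => ?_, fun h => ?_⟩
    · rcases Sym2.eq_iff.mp h with ⟨h, -⟩ | ⟨rfl, -⟩
      · exact hmy₁.ne h.symm
      · simp [dist_eq_one_iff_adj.mpr hy₁y] at hsy
    · have := Walk.dist_add_dist_of_mem_support hPsz (Psz.snd_mem_support_of_mem_edges h)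
      omega
    · have := Walk.dist_add_dist_of_mem_support hPyz (Pyz.snd_mem_support_of_mem_edges h)
      omega
    · rcases Sym2.eq_iff.mp h with ⟨h, -⟩ | ⟨-, rfl⟩
      · exact hy₁y.ne h
      · simp at hmy
  obtain ⟨t, ht, hty₁, htm⟩ := hch.exists_adj_adj_of_walk hmy₁.symm _ hedge
  have hts : t ≠ s := by rintro rfl; exact hsy₁ hty₁
  have hty : t ≠ y := by rintro rfl; simp [dist_eq_one_iff_adj.mpr htm.symm] at hmy
  simp only [Walk.mem_support_append_iff, Walk.support_reverse, List.mem_reverse,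
    Adj.support_toWalk, List.mem_cons, List.not_mem_nil, or_false] at ht
  rcases ht with (rfl | rfl) | ht | ht | rfl | rfl
  · exact absurd htm G.irrefl
  · exact absurd rfl hts
  · have := Walk.dist_add_dist_of_mem_support hPsz ht
    have : G.dist m z ≤ G.dist m t + G.dist t z := hG.dist_triangle
    rw [dist_eq_one_iff_adj.mpr htm.symm] at this
    exact absurd (hG.dist_eq_zero_iff.mp (by omega)).symm hts
  · rcases Pyz.eq_or_adj_of_mem_support_of_adj hG hPyz ht htm hyz with rfl | ⟨hyt, htz⟩
    · exact absurd rfl hty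
    · exact ⟨t, htm, htz, hyt.symm⟩
  · exact absurd rfl hty
  · exact absurd hty₁ G.irrefl

theorem dist_lt_max_of_path_four (hG : G.Connected) (hch : KChordal G 3)
    {x x₁ m y₁ y : V} (h₁ : G.Adj x x₁) (h₂ : G.Adj x₁ m) (h₃ : G.Adj m y₁) (h₄ : G.Adj y₁ y)
    (hxy : G.dist x y = 4) (z : V) : G.dist m z < max (G.dist x z) (G.dist y z) := by
  by_contra! hle
  obtain ⟨hxz, hyz⟩ := max_le_iff.mp hle
  have d₁ {a b : V} (h : G.Adj a b) : G.dist a b = 1 := dist_eq_one_iff_adj.mpr h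
  have tri (a b c : V) : G.dist a c ≤ G.dist a b + G.dist b c := hG.dist_triangle
  have := tri x m y; have := tri x x₁ m; have := tri m y₁ y
  have := tri x₁ m y; have := tri x x₁ y; have := tri m x₁ x; have := tri x y₁ y
  have := d₁ h₁; have := d₁ h₂; have := d₁ h₃; have := d₁ h₄
  have := d₁ h₁.symm; have := d₁ h₂.symm; have := d₁ h₃.symm
  have hxm : G.dist x m = 2 := by omega
  have hmy : G.dist m y = 2 := by omega
  have hmx : G.dist m x = 2 := dist_comm.trans hxm
  have key (s t : V) (hsm : G.Adj s m) (hsx : G.Adj s x) (hsz : G.dist s z + 1 = G.dist m z)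
      (htm : G.Adj t m) (hty : G.Adj t y) (htz : G.dist t z + 1 = G.dist m z) : False := by
    have := tri s m t; have := tri x s y; have := tri s t y
    have := d₁ hsm; have := d₁ hsx.symm; have := d₁ htm.symm; have := d₁ hty
    have := dist_le_max_of_adj_of_dist_eq_succ hG hch (z := z) hsm (show G.dist s t = _ by omega)
    omega
  have hmy_ne : m ≠ y := by rintro rfl; simp at hmy
  obtain ⟨s, hsm, hsz, hsx | hsy⟩ :=
    exists_adj_closer_adj_of_dist_eq_two hG hch h₁ h₂ hxm (by omega) hmy_ne hxz hyz
  · have := tri x s y; have := d₁ hsx.symm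
    obtain ⟨t, htm, htz, hty⟩ :=
      exists_adj_closer_adj_of_adj_closer hG hch h₃ h₄ hmy hsm (by omega) hsz hyz
    exact key s t hsm hsx hsz htm hty htz
  · have := tri y s x; have := d₁ hsy.symm; rw [dist_comm] at hxy
    obtain ⟨t, htm, htz, htx⟩ :=
      exists_adj_closer_adj_of_adj_closer hG hch h₂.symm h₁.symm hmx hsm (by omega) hsz hxz
    exact key t s htm htx htz hsm hsy hsz

theorem Walk.dist_getVert {u v : V} (p : G.Walk u v) (hp : p.length = G.dist u v) {i : ℕ}
    (hi : i ≤ p.length) : G.dist u (p.getVert i) = i := by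
  have := Walk.dist_add_dist_of_mem_support hp (p.getVert_mem_support i)
  have : G.dist u (p.getVert i) ≤ i := by simpa [hi] using dist_le (p.take i)
  have : G.dist (p.getVert i) v ≤ p.length - i := by simpa using dist_le (p.drop i)
  omega

section Center

variable [Fintype V]

theorem dist_le_ecc (x z : V) : G.dist x z ≤ ecc G x :=
  Finset.le_sup (Finset.mem_univ z)

theorem grad_le_ecc (x : V) : grad G ≤ ecc G x :=
  Nat.sInf_le ⟨x, rfl⟩

theorem Walk.ecc_le_max_of_mem_support (hG : G.Connected) (hch : KChordal G 3) {x y w : V}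
    (p : G.Walk x y) (hp : p.length = G.dist x y) (hw : w ∈ p.support) :
    ecc G w ≤ max (ecc G x) (ecc G y) :=
  Finset.sup_le fun z _ => (p.dist_le_max_of_mem_support hG hch hp hw z).trans
    (max_le_max (dist_le_ecc x z) (dist_le_ecc y z))

theorem Walk.mem_center_of_mem_support (hG : G.Connected) (hch : KChordal G 3) {x y w : V}
    (hx : x ∈ _root_.center G) (hy : y ∈ _root_.center G) (p : G.Walk x y)
    (hp : p.length = G.dist x y) (hw : w ∈ p.support) : w ∈ _root_.center G := by
  have := p.ecc_le_max_of_mem_support hG hch hp hw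
  rw [hx.out, hy.out, max_self] at this
  exact le_antisymm this (grad_le_ecc w)

theorem ecc_lt_max_of_path_four (hG : G.Connected) (hch : KChordal G 3)
    {x x₁ m y₁ y : V} (h₁ : G.Adj x x₁) (h₂ : G.Adj x₁ m) (h₃ : G.Adj m y₁) (h₄ : G.Adj y₁ y)
    (hxy : G.dist x y = 4) : ecc G m < max (ecc G x) (ecc G y) := by
  obtain ⟨z, -, hz⟩ := Finset.exists_mem_eq_sup Finset.univ ⟨m, Finset.mem_univ m⟩ (G.dist m)
  calc ecc G m = G.dist m z := hz
    _ < max (G.dist x z) (G.dist y z) := dist_lt_max_of_path_four hG hch h₁ h₂ h₃ h₄ hxy z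
    _ ≤ max (ecc G x) (ecc G y) := max_le_max (dist_le_ecc x z) (dist_le_ecc y z)

theorem dist_le_three_of_mem_center (hG : G.Connected) (hch : KChordal G 3) {x y : V}
    (hx : x ∈ _root_.center G) (hy : y ∈ _root_.center G) : G.dist x y ≤ 3 := by
  by_contra! h
  obtain ⟨p, hp⟩ := hG.exists_walk_length_eq_dist x y
  have hadj (i : ℕ) (hi : i < 4) : G.Adj (p.getVert i) (p.getVert (i + 1)) :=
    p.adj_getVert_succ (by omega)
  have hcenter (i : ℕ) : p.getVert i ∈ _root_.center G :=
    p.mem_center_of_mem_support hG hch hx hy hp (p.getVert_mem_support i)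
  have h04 : G.dist (p.getVert 0) (p.getVert 4) = 4 := by
    rw [p.getVert_zero, p.dist_getVert hp (by omega)]
  have := ecc_lt_max_of_path_four hG hch (hadj 0 (by omega)) (hadj 1 (by omega))
    (hadj 2 (by omega)) (hadj 3 (by omega)) h04
  rw [(hcenter 0).out, (hcenter 4).out, max_self] at this
  exact (grad_le_ecc _).not_gt this

theorem dist_induce_center_le_three (hG : G.Connected) (hch : KChordal G 3) {x y : V}
    (hx : x ∈ _root_.center G) (hy : y ∈ _root_.center G) :
    (G.induce (_root_.center G)).dist ⟨x, hx⟩ ⟨y, hy⟩ ≤ 3 := by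
  obtain ⟨p, hp⟩ := hG.exists_walk_length_eq_dist x y
  have hsupp (w : V) (hw : w ∈ p.support) : w ∈ _root_.center G :=
    p.mem_center_of_mem_support hG hch hx hy hp hw
  calc (G.induce (_root_.center G)).dist ⟨x, hx⟩ ⟨y, hy⟩
      ≤ (p.induce _ hsupp).length := dist_le _
    _ = p.length := by rw [← Walk.length_map (Embedding.induce _).toHom, Walk.map_induce]; rfl
    _ ≤ 3 := hp ▸ dist_le_three_of_mem_center hG hch hx hy

end Center

end SimpleGraph

theorem diam_center_le_three [Fintype V] (G : SimpleGraph V) (hG : G.Connected)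
    (hch : KChordal G 3) : gdiam (G.induce (_root_.center G)) ≤ 3 :=
  Finset.sup_le fun a _ => Finset.sup_le fun b _ =>
    SimpleGraph.dist_induce_center_le_three hG hch a.2 b.2
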